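/- For two occurrences x_i and x_j (i < j) of the same repeat in π (2-balanced case): either both are boundaries or neither is; if both are boundaries, then the adjacencies ⟨r(x_i), l(x_{i+1})⟩ and ⟨r(x_{j−1}), l(x_j)⟩ have the same direction, and the adjacencies ⟨r(x_{i−1}), l(x_i)⟩ and ⟨r(x_j), l(x_{j+1})⟩ have the same direction. -/

import Mathlib

open List

variable {α : Type*}

/-- A signed symbol: (name, orientation); `true` means positive. -/
abbrev SSym (α : Type*) := α × Bool

/-- Negation (orientation flip) of a signed symbol. -/
def symNeg (x : SSym α) : SSym α := (x.1, !x.2)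

/-- Left node of an occurrence: a node `(a, true)` denotes the head `aʰ`,
and `(a, false)` denotes the tail `aᵗ`; a positive occurrence contributes
`(aʰ, aᵗ)`, a negative one `(aᵗ, aʰ)`. -/
def lnode (x : SSym α) : SSym α := x

/-- Right node of an occurrence. -/
def rnode (x : SSym α) : SSym α := (x.1, !x.2)

/-- The unordered adjacency between two consecutive occurrences. -/
def adjOf (u v : SSym α) : Multiset (SSym α) := {rnode u, lnode v}

/-- The multiset of adjacencies of a chromosome. -/
def adjMS : List (SSym α) → Multiset (Multiset (SSym α))
  | u :: v :: rest => adjOf u v ::ₘ adjMS (v :: rest)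
  | _ => 0

/-- Reversed and negated form of a segment. -/
def revneg (s : List (SSym α)) : List (SSym α) := (s.map symNeg).reverse

/-- One symmetric reversal: the reversed segment is flanked by a pair of
inverted occurrences of the same repeat. -/
def SymRev (π π' : List (SSym α)) : Prop :=
  ∃ (p m q : List (SSym α)) (x : SSym α),
    π = p ++ x :: m ++ symNeg x :: q ∧
    π' = p ++ x :: revneg m ++ symNeg x :: q

/-- A symmetric reversal performed on the repeat `a`. -/
def SymRevOn (a : α) (π π' : List (SSym α)) : Prop :=
  ∃ (p m q : List (SSym α)) (x : SSym α), x.1 = a ∧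
    π = p ++ x :: m ++ symNeg x :: q ∧
    π' = p ++ x :: revneg m ++ symNeg x :: q

/-- `π` can be transformed into `τ` by a series of symmetric reversals. -/
def Transformable (π τ : List (SSym α)) : Prop := Relation.ReflTransGen SymRev π τ

/-- `π` can be transformed into `τ` by exactly `m` symmetric reversals. -/
def ChainRev : ℕ → List (SSym α) → List (SSym α) → Prop
  | 0, π, τ => π = τ
  | n + 1, π, τ => ∃ π', SymRev π π' ∧ ChainRev n π' τ

/-- A chromosome is flanked by `+r₀` and `-r₀`. -/
def IsChromosome (r₀ : α) (π : List (SSym α)) : Prop :=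
  ∃ m : List (SSym α), π = (r₀, true) :: m ++ [(r₀, false)]

/-- Duplication number of symbol `a` in `π` (occurrences in both orientations). -/
def dpCount [DecidableEq α] (a : α) (π : List (SSym α)) : ℕ := (π.map Prod.fst).count a

/-- Related chromosomes: identical duplication numbers for every gene/repeat. -/
def Related [DecidableEq α] (π τ : List (SSym α)) : Prop := ∀ a, dpCount a π = dpCount a τ

/-- A chromosome is simple if every adjacency appears only once. -/
def Simple [DecidableEq α] (π : List (SSym α)) : Prop := ∀ A, (adjMS π).count A ≤ 1

/-- Deletion of all occurrences of the repeat `b`. -/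
def delSym [DecidableEq α] (b : α) (π : List (SSym α)) : List (SSym α) :=
  π.filter fun x => decide (x.1 ≠ b)

/-- The repeat `a` is neighbor-consistent: the two adjacencies flanking any of its
occurrences in `π` are matched to the two adjacencies flanking a single
occurrence of `a` in `τ`. -/
def NeighborConsistent (π τ : List (SSym α)) (a : α) : Prop :=
  ∀ (p q : List (SSym α)) (u x v : SSym α),
    π = p ++ u :: x :: v :: q → x.1 = a →
    ∃ (p' q' : List (SSym α)) (u' y v' : SSym α),
      τ = p' ++ u' :: y :: v' :: q' ∧ y.1 = a ∧
      ({adjOf u x, adjOf x v} : Multiset (Multiset (SSym α))) =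
        {adjOf u' y, adjOf y v'}

/-- The repeat `a` is black in `IG(π, τ)`: its two occurrences in `π`
have opposite signs. -/
def Black (π : List (SSym α)) (a : α) : Prop :=
  ∃ (p q r : List (SSym α)) (x y : SSym α),
    π = p ++ x :: q ++ y :: r ∧ x.1 = a ∧ y.1 = a ∧ x.2 ≠ y.2

/-- The occurrence intervals of the repeats `a` and `b` interleave in `π`
(the adjacency relation of the intersection graph `IG(π, τ)`). -/
def Interleaves (π : List (SSym α)) (a b : α) : Prop :=
  a ≠ b ∧ ∃ (p q r s t : List (SSym α)) (x y x' y' : SSym α),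
    x.1 = a ∧ x'.1 = a ∧ y.1 = b ∧ y'.1 = b ∧
    (π = p ++ x :: q ++ y :: r ++ x' :: s ++ y' :: t ∨
     π = p ++ y :: q ++ x :: r ++ y' :: s ++ x' :: t)

/-- Two repeats are in the same connected component of the intersection graph. -/
def InSameComponent (π : List (SSym α)) : α → α → Prop :=
  Relation.ReflTransGen (Interleaves π)

/-- An abstract vertex-colored, vertex-weighted graph (intersection graph). -/
structure ColoredGraph (V : Type*) where
  adj : V → V → Prop
  black : V → Prop
  weight : V → ℕ

/-- The effect of performing a symmetric reversal on a black vertex `x`: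
(rule-I) the colors of all neighbors of `x` are toggled; (rule-II) adjacency
among the neighbors of `x` is complemented; (rule-III) the weight of `x`
is decremented (and `x` is deleted when the weight reaches `0`). -/
def reverseAt {V : Type*} [DecidableEq V] (G : ColoredGraph V) (x : V) :
    ColoredGraph V where
  adj u v := (G.adj x u ∧ G.adj x v ∧ ¬ G.adj u v ∧ u ≠ v) ∨
    (¬ (G.adj x u ∧ G.adj x v) ∧ G.adj u v)
  black v := (G.adj x v ∧ ¬ G.black v) ∨ (¬ G.adj x v ∧ G.black v)
  weight v := if v = x then G.weight v - 1 else G.weight v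

/-- Reachability in a colored graph avoiding deleted (`dead`) vertices. -/
def Reach {V : Type*} (G : ColoredGraph V) (dead : V → Prop) : V → V → Prop :=
  Relation.ReflTransGen (fun u v => G.adj u v ∧ ¬ dead u ∧ ¬ dead v)

/-- The 2-balanced condition: any two occurrences of the same repeat in `τ`
have opposite signs. -/
def BalancedTarget (τ : List (SSym α)) : Prop :=
  ∀ (p q r : List (SSym α)) (x y : SSym α),
    τ = p ++ x :: q ++ y :: r → x.1 = y.1 → x.2 ≠ y.2

/-- The adjacency `⟨u, v⟩` of `π` is positive: it is matched to an adjacency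
`⟨y_j, y_{j+1}⟩` of `τ` with `r(u) = r(y_j)` and `l(v) = l(y_{j+1})`, i.e.
`τ` contains the consecutive pair `u v` literally. -/
def PosIn (τ : List (SSym α)) (u v : SSym α) : Prop :=
  ∃ p q : List (SSym α), τ = p ++ u :: v :: q

/-- The adjacency `⟨u, v⟩` of `π` is negative: `τ` contains its reversed and
negated form. -/
def NegIn (τ : List (SSym α)) (u v : SSym α) : Prop := PosIn τ (symNeg v) (symNeg u)

/-- Positive and not entangled. -/
def StrictPos (τ : List (SSym α)) (u v : SSym α) : Prop := PosIn τ u v ∧ ¬ NegIn τ u v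

/-- Negative and not entangled. -/
def StrictNeg (τ : List (SSym α)) (u v : SSym α) : Prop := NegIn τ u v ∧ ¬ PosIn τ u v

/-- An entangled adjacency can be read both positively and negatively. -/
def EntangledAdj (τ : List (SSym α)) (u v : SSym α) : Prop := PosIn τ u v ∧ NegIn τ u v

/-- The occurrence `x` (with left neighbor `w` and right neighbor `v`) is a
boundary: its left and right adjacencies have distinct directions. -/
def IsBoundary (τ : List (SSym α)) (w x v : SSym α) : Prop :=
  (StrictPos τ w x ∧ StrictNeg τ x v) ∨ (StrictNeg τ w x ∧ StrictPos τ x v)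

/-- The list of consecutive pairs (adjacencies) of a chromosome. -/
def pairsOf (π : List (SSym α)) : List (SSym α × SSym α) := π.zip π.tail

/-- A direction assignment (`true` = positive) compatible with the bijection
between the adjacencies of `π` and `τ`. -/
def DirOK (τ π : List (SSym α)) (d : List Bool) : Prop :=
  List.Forall₂ (fun (pr : SSym α × SSym α) (b : Bool) =>
    (b = true → PosIn τ pr.1 pr.2) ∧ (b = false → NegIn τ pr.1 pr.2)) (pairsOf π) d

/-- Number of maximal `false`-runs (maximal negative segments). -/
def nMNSAux : Bool → List Bool → ℕ
  | _, [] => 0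
  | prev, b :: rest => (if prev = true ∧ b = false then 1 else 0) + nMNSAux b rest

def nMNS (d : List Bool) : ℕ := nMNSAux true d

/-- `N_MNS[π]`: the number of maximal negative segments of `π` relative to `τ`
(entangled adjacencies assigned so that the number of MNS is minimized,
i.e. taking the common direction of their neighbors). -/
noncomputable def NMNS (π τ : List (SSym α)) : ℕ :=
  sInf { n | ∃ d : List Bool, DirOK τ π d ∧ n = nMNS d }

/-- A node position of the alternative-cycle graph: `(i, false)` is the left
node of the `i`-th occurrence of `π`, `(i, true)` its right node. -/
abbrev NodePos := ℕ × Bool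

/-- The value (as a node of the form `aʰ`/`aᵗ`) sitting at a node position. -/
def nodeVal (π : List (SSym α)) (p : NodePos) : Option (SSym α) :=
  (π[p.1]?).map fun x => if p.2 then rnode x else lnode x

/-- The adjacency of `π` between positions `i` and `i+1`, if any. -/
def adjAt (π : List (SSym α)) (i : ℕ) : Option (Multiset (SSym α)) :=
  match π[i]?, π[i+1]? with
  | some u, some v => some (adjOf u v)
  | _, _ => none

/-- `f` is a bijection matching each adjacency of `τ` with an identical
adjacency of `π`. -/
def AdjBijection (π τ : List (SSym α)) (f : ℕ → ℕ) : Prop :=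
  Set.BijOn f (Set.Iio (τ.length - 1)) (Set.Iio (π.length - 1)) ∧
  ∀ k < τ.length - 1, adjAt τ k = adjAt π (f k)

/-- The blue edge of `ACG(π, τ, f)` corresponding to the `k`-th occurrence of
`τ`: it joins the node of the `f`-image of the adjacency on the left of `y_k`
carrying the value `l(y_k)` with the node of the `f`-image of the adjacency on
the right of `y_k` carrying the value `r(y_k)`. -/
def IsBlueEdge (π τ : List (SSym α)) (f : ℕ → ℕ) (k : ℕ) (e₁ e₂ : NodePos) : Prop :=
  ∃ y : SSym α, τ[k]? = some y ∧
    (if k = 0 then e₁ = (0, false)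
     else (e₁ = (f (k-1), true) ∨ e₁ = (f (k-1) + 1, false)) ∧
       nodeVal π e₁ = some (lnode y)) ∧
    (if k = τ.length - 1 then e₂ = (π.length - 1, true)
     else (e₂ = (f k, true) ∨ e₂ = (f k + 1, false)) ∧
       nodeVal π e₂ = some (rnode y))

/-- A green edge joins `r(x_i)` and `l(x_{i+1})` (an adjacency of `π`). -/
def GreenEdge (p q : NodePos) : Prop :=
  (p.2 = true ∧ q = (p.1 + 1, false)) ∨ (q.2 = true ∧ p = (q.1 + 1, false))

/-- A step along a blue or a green edge. -/
def BGStep (π τ : List (SSym α)) (f : ℕ → ℕ) (p q : NodePos) : Prop :=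
  GreenEdge p q ∨ ∃ k, IsBlueEdge π τ f k p q ∨ IsBlueEdge π τ f k q p


/-! Since duplication numbers are at most 2, `x` and `y` are the only occurrences of their repeat
in `π`, so the neighbours `w, v, w', v'` belong to other repeats and each of the four adjacencies
around `x` and `y` is strictly positive or strictly negative (`τ` is simple). As `τ` is 2-balanced
and related to `π`, it contains `x` and `symNeg x` exactly once each, hence has at most one
adjacency on each side of each of them. A positive `⟨w, x⟩` is the adjacency to the left of `x`
in `τ`, a negative one the adjacency to the right of `symNeg x`, and similarly for the other three.
As `π` is simple, its four adjacencies are distinct, so they occupy distinct places of `τ`. For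
`y = x` this forces opposite directions on `⟨w, x⟩, ⟨w', y⟩` and on `⟨x, v⟩, ⟨y, v'⟩`; for
`y = symNeg x` it forces equal directions on `⟨x, v⟩, ⟨w', y⟩` and on `⟨w, x⟩, ⟨y, v'⟩`. The claim
then follows propositionally. -/

@[simp] lemma symNeg_symNeg (x : SSym α) : symNeg (symNeg x) = x := by
  simp [symNeg]

lemma symNeg_fst (x : SSym α) : (symNeg x).1 = x.1 := rfl

lemma symNeg_ne_self (x : SSym α) : symNeg x ≠ x := by
  simp [symNeg, Prod.ext_iff]

lemma eq_or_eq_symNeg_of_fst_eq {x y : SSym α} (h : x.1 = y.1) : y = x ∨ y = symNeg x := by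
  obtain ⟨a, b⟩ := x
  obtain ⟨c, d⟩ := y
  obtain rfl : a = c := h
  cases b <;> cases d <;> simp [symNeg]

lemma ne_symNeg_of_fst_ne {u v : SSym α} (h : u.1 ≠ v.1) : u ≠ symNeg v :=
  fun huv => h (huv ▸ symNeg_fst v)

lemma count_map_fst [DecidableEq α] (l : List (SSym α)) (x : SSym α) :
    (l.map Prod.fst).count x.1 = l.count x + l.count (symNeg x) := by
  induction l with
  | nil => rfl
  | cons u l ih =>
    rcases eq_or_ne u.1 x.1 with h | h
    · rcases eq_or_eq_symNeg_of_fst_eq h.symm with rfl | rfl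
      · simp [ih, (symNeg_ne_self u).symm]
        omega
      · simp [ih, symNeg_fst, symNeg_ne_self]
        omega
    · have hx : u ≠ x := fun e => h (e ▸ rfl)
      simp [ih, h, hx, ne_symNeg_of_fst_ne h]

lemma adjOf_eq_pair (u v : SSym α) : adjOf u v = {symNeg u, v} := rfl

lemma adjOf_symNeg_symNeg (u v : SSym α) : adjOf (symNeg v) (symNeg u) = adjOf u v := by
  rw [adjOf_eq_pair, adjOf_eq_pair, symNeg_symNeg, Multiset.pair_comm]

lemma adjOf_eq_adjOf_iff {u v u' v' : SSym α} :
    adjOf u' v' = adjOf u v ↔ (u' = u ∧ v' = v) ∨ (u' = symNeg v ∧ v' = symNeg u) := by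
  refine ⟨fun h => ?_, ?_⟩
  · rw [adjOf_eq_pair, adjOf_eq_pair] at h
    simp only [Multiset.insert_eq_cons, Multiset.cons_eq_cons, Multiset.singleton_inj,
      Multiset.singleton_eq_cons_iff] at h
    rcases h with ⟨h₁, h₂⟩ | ⟨-, _, ⟨h₁, -⟩, h₂, -⟩
    · exact Or.inl ⟨by simpa using congrArg symNeg h₁, h₂⟩
    · exact Or.inr ⟨by simpa using (congrArg symNeg h₂).symm, h₁⟩
  · rintro (⟨rfl, rfl⟩ | ⟨rfl, rfl⟩)
    · rfl
    · exact adjOf_symNeg_symNeg u v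

lemma adjMS_eq_zipWith : ∀ l : List (SSym α), adjMS l = (List.zipWith adjOf l l.tail : Multiset _)
  | [] | [_] => rfl
  | u :: v :: rest => by
    rw [adjMS, adjMS_eq_zipWith (v :: rest)]
    rfl

lemma getElem?_zipWith_adjOf {l P Q : List (SSym α)} {u v : SSym α} (h : l = P ++ u :: v :: Q) :
    (List.zipWith adjOf l l.tail)[P.length]? = some (adjOf u v) := by
  subst h
  simp

lemma adjOf_mem_adjMS {l P Q : List (SSym α)} {u v : SSym α} (h : l = P ++ u :: v :: Q) :
    adjOf u v ∈ adjMS l := by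
  rw [adjMS_eq_zipWith, Multiset.mem_coe]
  exact List.mem_of_getElem? (getElem?_zipWith_adjOf h)

lemma exists_of_mem_adjMS {A : Multiset (SSym α)} : ∀ {l : List (SSym α)}, A ∈ adjMS l →
    ∃ P Q u v, l = P ++ u :: v :: Q ∧ A = adjOf u v
  | [], h | [_], h => by simp [adjMS] at h
  | u :: v :: rest, h => by
    rcases Multiset.mem_cons.1 h with rfl | h
    · exact ⟨[], rest, u, v, rfl, rfl⟩
    · obtain ⟨P, Q, u', v', hl, rfl⟩ := exists_of_mem_adjMS h
      exact ⟨u :: P, Q, u', v', by rw [hl, List.cons_append], rfl⟩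

lemma Simple.length_eq_of_adjOf_eq [DecidableEq α] {l P₁ Q₁ P₂ Q₂ : List (SSym α)}
    {u₁ v₁ u₂ v₂ : SSym α} (hs : Simple l) (h₁ : l = P₁ ++ u₁ :: v₁ :: Q₁)
    (h₂ : l = P₂ ++ u₂ :: v₂ :: Q₂) (he : adjOf u₁ v₁ = adjOf u₂ v₂) :
    P₁.length = P₂.length := by
  have hnd : (List.zipWith adjOf l l.tail).Nodup := by
    rw [← Multiset.coe_nodup, ← adjMS_eq_zipWith, Multiset.nodup_iff_count_le_one]
    exact hs
  have hlt := (List.getElem?_eq_some_iff.1 (getElem?_zipWith_adjOf h₁)).1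
  refine (List.getElem?_inj hlt hnd).1 ?_
  rw [getElem?_zipWith_adjOf h₁, getElem?_zipWith_adjOf h₂, he]

section Directions

variable {τ : List (SSym α)} {u v w x : SSym α}

lemma posIn_or_negIn_of_mem_adjMS (h : adjOf u v ∈ adjMS τ) : PosIn τ u v ∨ NegIn τ u v := by
  obtain ⟨P, Q, u', v', hτ, he⟩ := exists_of_mem_adjMS h
  rcases adjOf_eq_adjOf_iff.1 he.symm with ⟨rfl, rfl⟩ | ⟨rfl, rfl⟩
  · exact Or.inl ⟨P, Q, hτ⟩
  · exact Or.inr ⟨P, Q, hτ⟩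

lemma Simple.not_posIn_and_negIn [DecidableEq α] (hs : Simple τ) (hne : u ≠ symNeg v) :
    ¬(PosIn τ u v ∧ NegIn τ u v) := by
  rintro ⟨⟨P₁, Q₁, h₁⟩, ⟨P₂, Q₂, h₂⟩⟩
  have hlen := hs.length_eq_of_adjOf_eq h₁ h₂ (adjOf_symNeg_symNeg u v).symm
  obtain ⟨-, h⟩ := List.append_inj (h₁.symm.trans h₂) hlen
  exact hne (List.cons.inj h).1

lemma negIn_iff_not_posIn [DecidableEq α] {π P Q : List (SSym α)} (hst : Simple τ)
    (hA : adjMS π = adjMS τ) (h : π = P ++ u :: v :: Q) (hne : u.1 ≠ v.1) :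
    NegIn τ u v ↔ ¬PosIn τ u v :=
  ⟨fun hn hp => hst.not_posIn_and_negIn (ne_symNeg_of_fst_ne hne) ⟨hp, hn⟩,
   (posIn_or_negIn_of_mem_adjMS (hA ▸ adjOf_mem_adjMS h)).resolve_left⟩

lemma strictPos_iff (h : NegIn τ u v ↔ ¬PosIn τ u v) : StrictPos τ u v ↔ PosIn τ u v := by
  simp [StrictPos, h]

lemma isBoundary_iff (h₁ : NegIn τ w x ↔ ¬PosIn τ w x) (h₂ : NegIn τ x v ↔ ¬PosIn τ x v) :
    IsBoundary τ w x v ↔ (PosIn τ w x ↔ ¬PosIn τ x v) := by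
  simp only [IsBoundary, StrictPos, StrictNeg, h₁, h₂]
  tauto

end Directions

lemma eq_of_count_eq_one {β : Type*} [BEq β] [LawfulBEq β] {l s₁ t₁ s₂ t₂ : List β} {a : β}
    (hc : l.count a = 1) (h₁ : l = s₁ ++ a :: t₁) (h₂ : l = s₂ ++ a :: t₂) :
    s₁ = s₂ ∧ t₁ = t₂ := by
  subst h₁
  simp only [List.count_append, List.count_cons_self] at hc
  have hs : a ∉ s₁ := List.count_eq_zero.1 (by omega)
  have ht : a ∉ t₁ := List.count_eq_zero.1 (by omega)
  obtain ⟨hs, -, ht⟩ := (List.append_cons_inj_of_notMem hs ht).1 h₂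
  exact ⟨hs, ht⟩

lemma BalancedTarget.count_le_one [DecidableEq α] {τ : List (SSym α)} (hb : BalancedTarget τ)
    (x : SSym α) : τ.count x ≤ 1 := by
  by_contra! h
  obtain ⟨r₁, r₂, rfl, h₁, h₂⟩ :=
    List.cons_sublist_iff.1 (List.replicate_sublist_iff.2 h : List.replicate 2 x <+ τ)
  obtain ⟨s, t, rfl⟩ := List.append_of_mem h₁
  obtain ⟨s', t', rfl⟩ := List.append_of_mem (List.singleton_sublist.1 h₂)
  exact hb s (t ++ s') t' x x (by simp) rfl rfl

lemma BalancedTarget.count_eq_one [DecidableEq α] {τ : List (SSym α)} {x : SSym α}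
    (hb : BalancedTarget τ) (h : 2 ≤ dpCount x.1 τ) : τ.count x = 1 := by
  have := count_map_fst τ x
  have := hb.count_le_one x
  have := hb.count_le_one (symNeg x)
  unfold dpCount at h
  omega

def IsLeftAdj (τ : List (SSym α)) (z : SSym α) (A : Multiset (SSym α)) : Prop :=
  ∃ u, PosIn τ u z ∧ A = adjOf u z

def IsRightAdj (τ : List (SSym α)) (z : SSym α) (A : Multiset (SSym α)) : Prop :=
  ∃ v, PosIn τ z v ∧ A = adjOf z v

section Sides

variable {τ : List (SSym α)} {u v z : SSym α} {A B : Multiset (SSym α)}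

lemma IsLeftAdj.unique [DecidableEq α] (hA : IsLeftAdj τ z A) (hz : τ.count z = 1)
    (hB : IsLeftAdj τ z B) : A = B := by
  obtain ⟨u, ⟨P, Q, h⟩, rfl⟩ := hA
  obtain ⟨u', ⟨P', Q', h'⟩, rfl⟩ := hB
  obtain ⟨hP, -⟩ := eq_of_count_eq_one hz (s₁ := P ++ [u]) (s₂ := P' ++ [u']) (t₁ := Q) (t₂ := Q')
    (by simp [h]) (by simp [h'])
  rw [(List.append_singleton_inj.1 hP).2]

lemma IsRightAdj.unique [DecidableEq α] (hA : IsRightAdj τ z A) (hz : τ.count z = 1)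
    (hB : IsRightAdj τ z B) : A = B := by
  obtain ⟨v, ⟨P, Q, h⟩, rfl⟩ := hA
  obtain ⟨v', ⟨P', Q', h'⟩, rfl⟩ := hB
  obtain ⟨-, hQ⟩ := eq_of_count_eq_one hz h h'
  rw [(List.cons.inj hQ).1]

lemma PosIn.isLeftAdj (h : PosIn τ u z) : IsLeftAdj τ z (adjOf u z) := ⟨u, h, rfl⟩

lemma PosIn.isRightAdj (h : PosIn τ z v) : IsRightAdj τ z (adjOf z v) := ⟨v, h, rfl⟩

lemma NegIn.isRightAdj (h : NegIn τ u z) : IsRightAdj τ (symNeg z) (adjOf u z) :=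
  ⟨symNeg u, h, (adjOf_symNeg_symNeg u z).symm⟩

lemma NegIn.isLeftAdj (h : NegIn τ z v) : IsLeftAdj τ (symNeg z) (adjOf z v) :=
  ⟨symNeg v, h, (adjOf_symNeg_symNeg z v).symm⟩

end Sides

section Occurrences

variable [DecidableEq α] {π p q r : List (SSym α)} {w x v w' y v' : SSym α}

lemma two_le_dpCount (h : [x, y] <+ π) (hxy : x.1 = y.1) : 2 ≤ dpCount x.1 π := by
  simpa [dpCount, hxy] using (h.map Prod.fst).count_le y.1

lemma fst_ne_of_dpCount_le_two (hdp : dpCount x.1 π ≤ 2)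
    (hdec : π = p ++ w :: x :: v :: q ++ w' :: y :: v' :: r) (hxy : x.1 = y.1) :
    w.1 ≠ x.1 ∧ v.1 ≠ x.1 ∧ w'.1 ≠ x.1 ∧ v'.1 ≠ x.1 := by
  have hsub : [w, x, v, w', y, v'] <+ π := by subst hdec; simp
  have hcount := ((hsub.map Prod.fst).count_le x.1).trans hdp
  refine ⟨fun h => ?_, fun h => ?_, fun h => ?_, fun h => ?_⟩ <;>
    simp [List.count_cons, h, hxy] at hcount <;> omega

lemma negIn_iff_not_posIn_around {τ P Q : List (SSym α)} (hst : Simple τ)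
    (hA : adjMS π = adjMS τ) (h : π = P ++ w :: x :: v :: Q) (hw : w.1 ≠ x.1) (hv : v.1 ≠ x.1) :
    (NegIn τ w x ↔ ¬PosIn τ w x) ∧ (NegIn τ x v ↔ ¬PosIn τ x v) :=
  ⟨negIn_iff_not_posIn hst hA h hw,
   negIn_iff_not_posIn (P := P ++ [w]) (Q := Q) hst hA (by simp [h]) hv.symm⟩

lemma Simple.adjOf_ne_of_eq_append (hs : Simple π)
    (hdec : π = p ++ w :: x :: v :: q ++ w' :: y :: v' :: r) :
    adjOf w x ≠ adjOf w' y ∧ adjOf x v ≠ adjOf y v' ∧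
      adjOf x v ≠ adjOf w' y ∧ adjOf w x ≠ adjOf y v' := by
  have h₁ : π = p ++ w :: x :: (v :: q ++ w' :: y :: v' :: r) := by simp [hdec]
  have h₂ : π = (p ++ [w]) ++ x :: v :: (q ++ w' :: y :: v' :: r) := by simp [hdec]
  have h₃ : π = (p ++ w :: x :: v :: q) ++ w' :: y :: v' :: r := by simp [hdec]
  have h₄ : π = (p ++ w :: x :: v :: q ++ [w']) ++ y :: v' :: r := by simp [hdec]
  refine ⟨fun he => ?_, fun he => ?_, fun he => ?_, fun he => ?_⟩
  · simpa using hs.length_eq_of_adjOf_eq h₁ h₃ he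
  · simpa using hs.length_eq_of_adjOf_eq h₂ h₄ he
  · simpa using hs.length_eq_of_adjOf_eq h₂ h₃ he
  · simpa using hs.length_eq_of_adjOf_eq h₁ h₄ he

end Occurrences

-- `a, b, c, d` stand for the positivity of `⟨w, x⟩, ⟨x, v⟩, ⟨w', y⟩, ⟨y, v'⟩`.
lemma pairing_of_opposite {a b c d : Prop} (hac : ¬(a ∧ c)) (hac' : ¬(¬a ∧ ¬c))
    (hbd : ¬(b ∧ d)) (hbd' : ¬(¬b ∧ ¬d)) :
    ((a ↔ ¬b) ↔ (c ↔ ¬d)) ∧ ((a ↔ ¬b) → (c ↔ ¬d) → (b ↔ c) ∧ (a ↔ d)) := by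
  tauto

lemma pairing_of_crossed {a b c d : Prop} (hbc : ¬(b ∧ ¬c)) (hbc' : ¬(¬b ∧ c))
    (had : ¬(a ∧ ¬d)) (had' : ¬(¬a ∧ d)) :
    ((a ↔ ¬b) ↔ (c ↔ ¬d)) ∧ ((a ↔ ¬b) → (c ↔ ¬d) → (b ↔ c) ∧ (a ↔ d)) := by
  tauto

theorem boundary_pairing_general [DecidableEq α]
    (π τ : List (SSym α))
    (hs : Simple π) (hst : Simple τ) (hrel : Related π τ)
    (hdpπ : ∀ c, dpCount c π ≤ 2)
    (hbal : BalancedTarget τ) (hA : adjMS π = adjMS τ)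
    (p q r : List (SSym α)) (w x v w' y v' : SSym α)
    (hdec : π = p ++ w :: x :: v :: q ++ w' :: y :: v' :: r)
    (hxy : x.1 = y.1) :
    (IsBoundary τ w x v ↔ IsBoundary τ w' y v') ∧
    (IsBoundary τ w x v → IsBoundary τ w' y v' →
      ((StrictPos τ x v ↔ StrictPos τ w' y) ∧
       (StrictPos τ w x ↔ StrictPos τ y v'))) := by
  obtain ⟨hw, hv, hw', hv'⟩ := fst_ne_of_dpCount_le_two (hdpπ x.1) hdec hxy
  have hτ : 2 ≤ dpCount x.1 τ := hrel x.1 ▸ two_le_dpCount (by simp [hdec]) hxy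
  have hx : τ.count x = 1 := hbal.count_eq_one hτ
  have hx' : τ.count (symNeg x) = 1 := hbal.count_eq_one hτ
  obtain ⟨d₁, d₂⟩ := negIn_iff_not_posIn_around hst hA
    (by simp [hdec] : π = p ++ w :: x :: v :: (q ++ w' :: y :: v' :: r)) hw hv
  obtain ⟨d₃, d₄⟩ := negIn_iff_not_posIn_around hst hA
    (by simp [hdec] : π = (p ++ w :: x :: v :: q) ++ w' :: y :: v' :: r) (hxy ▸ hw') (hxy ▸ hv')
  obtain ⟨h₁₃, h₂₄, h₂₃, h₁₄⟩ := hs.adjOf_ne_of_eq_append hdec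
  rw [isBoundary_iff d₁ d₂, isBoundary_iff d₃ d₄, strictPos_iff d₁, strictPos_iff d₂,
    strictPos_iff d₃, strictPos_iff d₄]
  rcases eq_or_eq_symNeg_of_fst_eq hxy with hy | hy <;> subst y
  · exact pairing_of_opposite
      (fun ⟨h, h'⟩ => h₁₃ (h.isLeftAdj.unique hx h'.isLeftAdj))
      (fun ⟨h, h'⟩ => h₁₃ ((d₁.2 h).isRightAdj.unique hx' (d₃.2 h').isRightAdj))
      (fun ⟨h, h'⟩ => h₂₄ (h.isRightAdj.unique hx h'.isRightAdj))
      (fun ⟨h, h'⟩ => h₂₄ ((d₂.2 h).isLeftAdj.unique hx' (d₄.2 h').isLeftAdj))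
  · exact pairing_of_crossed
      (fun ⟨h, h'⟩ => h₂₃ (h.isRightAdj.unique hx (by simpa using (d₃.2 h').isRightAdj)))
      (fun ⟨h, h'⟩ => h₂₃ ((d₂.2 h).isLeftAdj.unique hx' h'.isLeftAdj))
      (fun ⟨h, h'⟩ => h₁₄ (h.isLeftAdj.unique hx (by simpa using (d₄.2 h').isLeftAdj)))
      (fun ⟨h, h'⟩ => h₁₄ ((d₁.2 h).isRightAdj.unique hx' h'.isRightAdj))

/-- two occurrences of the same repeat are either both
boundaries or neither; if both, the right adjacency of the first and the left
adjacency of the second have the same direction, as do the left adjacency of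
the first and the right adjacency of the second. -/
theorem boundary_pairing [DecidableEq α] (r₀ : α)
    (π τ : List (SSym α)) (hπ : IsChromosome r₀ π) (hτ : IsChromosome r₀ τ)
    (hs : Simple π) (hst : Simple τ) (hrel : Related π τ)
    (hdpπ : ∀ c, dpCount c π ≤ 2) (hdpτ : ∀ c, dpCount c τ ≤ 2)
    (hbal : BalancedTarget τ) (hA : adjMS π = adjMS τ)
    (p q r : List (SSym α)) (w x v w' y v' : SSym α)
    (hdec : π = p ++ w :: x :: v :: q ++ w' :: y :: v' :: r)
    (hxy : x.1 = y.1) :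
    (IsBoundary τ w x v ↔ IsBoundary τ w' y v') ∧
    (IsBoundary τ w x v → IsBoundary τ w' y v' →
      ((StrictPos τ x v ↔ StrictPos τ w' y) ∧
       (StrictPos τ w x ↔ StrictPos τ y v'))) :=
  boundary_pairing_general π τ hs hst hrel hdpπ hbal hA p q r w x v w' y v' hdec hxy
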